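/- Let b ≥ 1 and 0 < m ≤ M, and set q = m^{1/(2^b+1)} · M^{2^b/(2^b+1)}. For every price sequence σ of length n ≥ 1 with all prices in [m, M], if max_k σ k ≥ q, then max_k σ k ≤ (M/m)^{1/(2^b+1)} · profit(RPP(q), σ). -/

import Mathlib

/-- The maximum price of a price sequence of positive length. -/
noncomputable def maxPrice {n : ℕ} (hn : 0 < n) (σ : Fin n → ℝ) : ℝ :=
  Finset.univ.sup' ⟨⟨0, hn⟩, Finset.mem_univ _⟩ σ

/-- The profit of the reservation-price strategy `RPP p` on the price sequence
`σ`: it accepts at the least index `k` with `σ k ≥ p`, obtaining `σ k`; if no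
such index exists it must accept the last price `σ (n-1)`. -/
noncomputable def rppProfit {n : ℕ} (hn : 0 < n) (p : ℝ) (σ : Fin n → ℝ) : ℝ :=
  if h : ∃ k : Fin n, p ≤ σ k then
    σ ((Finset.univ.filter (fun k : Fin n => p ≤ σ k)).min'
      (h.imp fun k hk => Finset.mem_filter.mpr ⟨Finset.mem_univ _, hk⟩))
  else σ ⟨n - 1, Nat.sub_lt hn one_pos⟩

/- Once some price reaches the reservation price `q`, `RPP(q)` earns at least `q` while the
optimum is at most `M`; and `M / q = (M/m)^{1/(2^b+1)}` because the two exponents in `q`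
add up to `1`. -/

section Rpp

variable {n : ℕ} (hn : 0 < n) {σ : Fin n → ℝ} {p M : ℝ}

theorem maxPrice_le (hσ : ∀ i, σ i ≤ M) : maxPrice hn σ ≤ M :=
  Finset.sup'_le _ _ fun i _ => hσ i

theorem exists_le_of_le_maxPrice (h : p ≤ maxPrice hn σ) : ∃ k, p ≤ σ k := by
  obtain ⟨k, -, hk⟩ := (Finset.le_sup'_iff _).mp h
  exact ⟨k, hk⟩

theorem le_rppProfit (h : ∃ k, p ≤ σ k) : p ≤ rppProfit hn p σ := by
  rw [rppProfit, dif_pos h]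
  exact (Finset.mem_filter.mp (Finset.min'_mem (Finset.univ.filter fun k => p ≤ σ k) _)).2

theorem maxPrice_le_div_mul_rppProfit (hp : 0 < p) (hσ : ∀ i, σ i ≤ M)
    (hmax : p ≤ maxPrice hn σ) : maxPrice hn σ ≤ M / p * rppProfit hn p σ := by
  have hpM : p ≤ M := hmax.trans (maxPrice_le hn hσ)
  calc maxPrice hn σ ≤ M := maxPrice_le hn hσ
    _ = M / p * p := (div_mul_cancel₀ M hp.ne').symm
    _ ≤ M / p * rppProfit hn p σ := by
      gcongr
      · exact div_nonneg (hp.le.trans hpM) hp.le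
      · exact le_rppProfit hn (exists_le_of_le_maxPrice hn hmax)

end Rpp

theorem Real.div_rpow_mul_rpow_of_add_eq_one {m M s t : ℝ} (hm : 0 < m) (hM : 0 < M)
    (hst : s + t = 1) : M / (m ^ s * M ^ t) = (M / m) ^ s := by
  have hMs : M = M ^ s * M ^ t := by rw [← Real.rpow_add hM, hst, Real.rpow_one]
  rw [Real.div_rpow hM.le hm.le]
  nth_rewrite 1 [hMs]
  field_simp

theorem rpp_competitive_above_last_reservation_price
    (b : ℕ) (m M : ℝ) (hm : 0 < m) (hmM : m ≤ M)
    (n : ℕ) (hn : 0 < n) (σ : Fin n → ℝ) (hσ : ∀ i, m ≤ σ i ∧ σ i ≤ M)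
    (hmax : m ^ ((1 : ℝ) / (2 ^ b + 1)) * M ^ ((2 : ℝ) ^ b / (2 ^ b + 1)) ≤ maxPrice hn σ) :
    maxPrice hn σ ≤ (M / m) ^ ((1 : ℝ) / (2 ^ b + 1)) *
      rppProfit hn (m ^ ((1 : ℝ) / (2 ^ b + 1)) * M ^ ((2 : ℝ) ^ b / (2 ^ b + 1))) σ := by
  have hM : 0 < M := hm.trans_le hmM
  have hexp : (1 : ℝ) / (2 ^ b + 1) + 2 ^ b / (2 ^ b + 1) = 1 := by
    rw [← add_div, add_comm, div_self (by positivity)]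
  rw [← Real.div_rpow_mul_rpow_of_add_eq_one hm hM hexp]
  exact maxPrice_le_div_mul_rppProfit hn (by positivity) (fun i => (hσ i).2) hmax
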